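/- Let n ≥ 3 and S = {f, r, r^{n-1}} in D_n. Then λ₁(D_n, S) = ⌊n/2⌋ + 1 if 4 divides n; λ₁(D_n, S) = ⌊n/2⌋ if n is even but 4 does not divide n; and λ₁(D_n, S) = ⌊n/2⌋ + 1 if n is odd. -/

import Mathlib

/-!
Write `‖a‖ = |a.valMinAbs|` for the distance from `a ∈ ZMod n` to `0`. Left multiplication by a
letter of `S = {f, r, r⁻¹}` changes the function `rᵃ ↦ ‖a‖`, `f rᵃ ↦ ‖a‖ + 1` by at most one,
and `f rᵃ` is `f` followed by `‖a‖` copies of `r` or of `r⁻¹`, so `l_S(f rᵃ) = ‖a‖ + 1`.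
Conjugates of `r^{±1}` are again `r^{±1}`, and the conjugates of `f` are the reflections
`f r^{2k}`, so `λ₁ = 1 + max_k ‖2k‖`. This maximum is `⌊n/2⌋` (attained at `k = n/4`, or at
`k = 2⁻¹ ⌊n/2⌋` for odd `n`) unless `n ≡ 2 mod 4`: then `n/2` is odd, reducing mod `2` shows
`±n/2 ≠ 2k`, and the maximum is `n/2 - 1`.
-/

open DihedralGroup

/-- The word length of `g` with respect to a generating set `S`: the minimal
number of letters of `S` needed to write `g` as a product. -/
noncomputable def wordLength {G : Type*} [Group G] (S : Set G) (g : G) : ℕ :=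
  sInf {k | ∃ l : List G, (∀ x ∈ l, x ∈ S) ∧ l.prod = g ∧ l.length = k}

section WordLength

variable {G : Type*} [Group G] {S : Set G}

theorem wordLength_le_length {l : List G} (hl : ∀ x ∈ l, x ∈ S) :
    wordLength S l.prod ≤ l.length :=
  Nat.sInf_le ⟨l, hl, rfl, rfl⟩

theorem wordLength_le_one_of_mem {x : G} (hx : x ∈ S) : wordLength S x ≤ 1 := by
  simpa using wordLength_le_length (S := S) (l := [x]) (by simpa using hx)

theorem le_length_of_le_add_one {f : G → ℕ} (h1 : f 1 = 0)
    (hf : ∀ s ∈ S, ∀ g, f (s * g) ≤ f g + 1) {l : List G} (hl : ∀ x ∈ l, x ∈ S) :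
    f l.prod ≤ l.length := by
  induction l with
  | nil => simp [h1]
  | cons s l ih =>
    rw [List.forall_mem_cons] at hl
    rw [List.prod_cons, List.length_cons]
    exact (hf s hl.1 _).trans (Nat.add_le_add_right (ih hl.2) 1)

theorem wordLength_eq_of_le_add_one {f : G → ℕ} (h1 : f 1 = 0)
    (hf : ∀ s ∈ S, ∀ g, f (s * g) ≤ f g + 1) {l : List G} (hl : ∀ x ∈ l, x ∈ S)
    (hlen : l.length = f l.prod) : wordLength S l.prod = f l.prod := by
  refine le_antisymm (hlen ▸ wordLength_le_length hl) (le_csInf ⟨l.length, l, hl, rfl, rfl⟩ ?_)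
  rintro _ ⟨w, hw, hprod, rfl⟩
  exact hprod ▸ le_length_of_le_add_one h1 hf hw

end WordLength

namespace ZMod

variable {n : ℕ}

theorem natAbs_valMinAbs_add_le_add (a b : ZMod n) :
    (a + b).valMinAbs.natAbs ≤ a.valMinAbs.natAbs + b.valMinAbs.natAbs :=
  (natAbs_valMinAbs_add_le a b).trans (Int.natAbs_add_le _ _)

theorem natAbs_valMinAbs_one_le [NeZero n] : (1 : ZMod n).valMinAbs.natAbs ≤ 1 :=
  natAbs_min_of_le_div_two n _ 1 (by simp) (natAbs_valMinAbs_le 1)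

theorem natAbs_valMinAbs_natCast_of_le_half {a : ℕ} (ha : a ≤ n / 2) :
    (a : ZMod n).valMinAbs.natAbs = a := by
  rw [valMinAbs_natCast_of_le_half ha, Int.natAbs_natCast]

theorem natAbs_valMinAbs_two_mul_ne_half (h2 : 2 ∣ n) (h4 : ¬ 4 ∣ n) (k : ZMod n) :
    (2 * k).valMinAbs.natAbs ≠ n / 2 := by
  intro h
  rw [← natAbs_valMinAbs_natCast_of_le_half le_rfl, natAbs_valMinAbs_eq_natAbs_valMinAbs] at h
  have hhalf : ((n / 2 : ℕ) : ZMod 2) = 1 := natCast_eq_one_iff_odd.2 (by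
    rw [Nat.odd_iff]; omega)
  have htwo : (2 : ZMod 2) = 0 := rfl
  rcases h with h | h <;>
    · have := congrArg (castHom h2 (ZMod 2)) h
      simp only [map_mul, map_ofNat, map_neg, map_natCast, htwo, zero_mul, hhalf] at this
      exact absurd this (by decide)

theorem natAbs_valMinAbs_two_mul_natCast {m : ℕ} (hm : 2 * m ≤ n / 2) :
    (2 * (m : ZMod n)).valMinAbs.natAbs = 2 * m := by
  rw [← natAbs_valMinAbs_natCast_of_le_half hm]
  push_cast
  rfl

theorem isGreatest_natAbs_valMinAbs_two_mul_of_four_dvd [NeZero n] (h4 : 4 ∣ n) :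
    IsGreatest (Set.range fun k : ZMod n => (2 * k).valMinAbs.natAbs) (n / 2) := by
  refine ⟨⟨(n / 4 : ℕ), (natAbs_valMinAbs_two_mul_natCast (by omega)).trans (by omega)⟩, ?_⟩
  rintro _ ⟨k, rfl⟩
  exact natAbs_valMinAbs_le _

theorem isGreatest_natAbs_valMinAbs_two_mul_of_two_dvd_of_not_four_dvd [NeZero n] (h2 : 2 ∣ n)
    (h4 : ¬ 4 ∣ n) :
    IsGreatest (Set.range fun k : ZMod n => (2 * k).valMinAbs.natAbs) (n / 2 - 1) := by
  refine ⟨⟨(n / 4 : ℕ), (natAbs_valMinAbs_two_mul_natCast (by omega)).trans (by omega)⟩, ?_⟩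
  rintro _ ⟨k, rfl⟩
  have := natAbs_valMinAbs_two_mul_ne_half h2 h4 k
  have := natAbs_valMinAbs_le (2 * k)
  dsimp only
  omega

theorem isGreatest_natAbs_valMinAbs_two_mul_of_odd [NeZero n] (hn : Odd n) :
    IsGreatest (Set.range fun k : ZMod n => (2 * k).valMinAbs.natAbs) (n / 2) := by
  refine ⟨⟨((n + 1) / 2 * (n / 2) : ℕ), ?_⟩, ?_⟩
  · -- `(n + 1) / 2` is the inverse of `2` modulo `n`
    have hinv : 2 * ((n + 1) / 2) = n + 1 := by rcases hn with ⟨m, rfl⟩; omega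
    change (2 * (((n + 1) / 2 * (n / 2) : ℕ) : ZMod n)).valMinAbs.natAbs = n / 2
    rw [show (2 : ZMod n) * (((n + 1) / 2 * (n / 2) : ℕ) : ZMod n)
        = ((2 * ((n + 1) / 2) * (n / 2) : ℕ) : ZMod n) by push_cast; ring,
      hinv, Nat.cast_mul, Nat.cast_succ, natCast_self, zero_add, one_mul]
    exact natAbs_valMinAbs_natCast_of_le_half le_rfl
  · rintro _ ⟨k, rfl⟩
    exact natAbs_valMinAbs_le _

end ZMod

namespace DihedralGroup

variable {n : ℕ}

def stdGens (n : ℕ) : Set (DihedralGroup n) := {sr 0, r 1, (r 1 : DihedralGroup n) ^ (n - 1)}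

def wordNorm : DihedralGroup n → ℕ
  | r a => a.valMinAbs.natAbs
  | sr a => a.valMinAbs.natAbs + 1

theorem r_one_pow_pred [NeZero n] : (r 1 : DihedralGroup n) ^ (n - 1) = r (-1) := by
  rw [r_one_pow, Nat.cast_pred (NeZero.pos n), ZMod.natCast_self, zero_sub]

theorem r_one_mem_stdGens : (r 1 : DihedralGroup n) ∈ stdGens n := by
  simp [stdGens]

theorem r_neg_one_mem_stdGens [NeZero n] : (r (-1) : DihedralGroup n) ∈ stdGens n :=
  .inr (.inr r_one_pow_pred.symm)

theorem wordNorm_mul_le [NeZero n] {s : DihedralGroup n} (hs : s ∈ stdGens n)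
    (g : DihedralGroup n) : wordNorm (s * g) ≤ wordNorm g + 1 := by
  have hstep : ∀ ε : ZMod n, (ε = 1 ∨ ε = -1) →
      ∀ a : ZMod n, (a + ε).valMinAbs.natAbs ≤ a.valMinAbs.natAbs + 1 := by
    rintro ε hε a
    refine (ZMod.natAbs_valMinAbs_add_le_add a ε).trans (Nat.add_le_add_left ?_ _)
    rcases hε with rfl | rfl
    · exact ZMod.natAbs_valMinAbs_one_le
    · exact (ZMod.natAbs_valMinAbs_neg 1).trans_le ZMod.natAbs_valMinAbs_one_le
  rcases hs with rfl | rfl | rfl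
  · cases g <;> simp only [wordNorm, sr_mul_r, sr_mul_sr, zero_add, sub_zero] <;> omega
  · cases g with
    | r a => simpa only [wordNorm, r_mul_r, add_comm] using hstep 1 (.inl rfl) a
    | sr a =>
      simp only [wordNorm, r_mul_sr, sub_eq_add_neg]
      exact Nat.add_le_add_right (hstep (-1) (.inr rfl) a) 1
  · rw [r_one_pow_pred]
    cases g with
    | r a => simpa only [wordNorm, r_mul_r, add_comm] using hstep (-1) (.inr rfl) a
    | sr a =>
      simp only [wordNorm, r_mul_sr, sub_neg_eq_add]
      exact Nat.add_le_add_right (hstep 1 (.inl rfl) a) 1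

theorem exists_word_r [NeZero n] (a : ZMod n) : ∃ l : List (DihedralGroup n),
    (∀ x ∈ l, x ∈ stdGens n) ∧ l.prod = r a ∧ l.length = a.valMinAbs.natAbs := by
  rcases Int.natAbs_eq a.valMinAbs with h | h
  · refine ⟨List.replicate a.valMinAbs.natAbs (r 1), ?_, ?_, List.length_replicate⟩
    · simpa using fun _ => r_one_mem_stdGens
    · rw [List.prod_replicate, r_one_pow, ← Int.cast_natCast, ← h, ZMod.coe_valMinAbs]
  · refine ⟨List.replicate a.valMinAbs.natAbs (r (-1)), ?_, ?_, List.length_replicate⟩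
    · simpa using fun _ => r_neg_one_mem_stdGens
    · rw [List.prod_replicate, r_pow, neg_one_mul, ← Int.cast_natCast, ← Int.cast_neg, ← h,
        ZMod.coe_valMinAbs]

theorem wordLength_sr [NeZero n] (a : ZMod n) :
    wordLength (stdGens n) (sr a) = a.valMinAbs.natAbs + 1 := by
  obtain ⟨l, hl, hprod, hlen⟩ := exists_word_r a
  have hword : (sr 0 :: l).prod = sr a := by rw [List.prod_cons, hprod, sr_mul_r, zero_add]
  have hlen' : (sr 0 :: l).length = wordNorm (sr 0 :: l).prod := by
    rw [hword, List.length_cons, hlen]; rfl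
  have := wordLength_eq_of_le_add_one (by rw [one_def]; simp [wordNorm])
    (fun s hs g => wordNorm_mul_le hs g) (List.forall_mem_cons.2 ⟨.inl rfl, hl⟩) hlen'
  rwa [hword] at this

theorem inv_r_mul_sr_zero_mul_r (k : ZMod n) : (r k)⁻¹ * sr 0 * r k = sr (2 * k) := by
  rw [inv_r, r_mul_sr, sr_mul_r]
  congr 1
  ring

theorem inv_mul_sr_zero_mul (g : DihedralGroup n) : ∃ k, g⁻¹ * sr 0 * g = sr (2 * k) := by
  cases g with
  | r k => exact ⟨k, inv_r_mul_sr_zero_mul_r k⟩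
  | sr k => exact ⟨k, by rw [inv_sr, sr_mul_sr, r_mul_sr]; congr 1; ring⟩

theorem inv_mul_r_mul (g : DihedralGroup n) (a : ZMod n) :
    g⁻¹ * r a * g = r a ∨ g⁻¹ * r a * g = r (-a) := by
  cases g with
  | r k => exact .inl (by rw [inv_r, r_mul_r, r_mul_r]; congr 1; ring)
  | sr k => exact .inr (by rw [inv_sr, sr_mul_r, sr_mul_sr]; congr 1; ring)

theorem inv_mul_r_mul_mem_stdGens [NeZero n] (g : DihedralGroup n) {ε : ZMod n}
    (hε : ε = 1 ∨ ε = -1) : g⁻¹ * r ε * g ∈ stdGens n := by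
  rcases inv_mul_r_mul g ε with h | h <;> rw [h] <;> rcases hε with rfl | rfl <;>
    simp only [neg_neg, r_one_mem_stdGens, r_neg_one_mem_stdGens]

theorem isGreatest_wordLength_conj_stdGens [NeZero n] {m : ℕ}
    (hm : IsGreatest (Set.range fun k : ZMod n => (2 * k).valMinAbs.natAbs) m) :
    IsGreatest {k | ∃ g : DihedralGroup n, ∃ s ∈ stdGens n,
      k = wordLength (stdGens n) (g⁻¹ * s * g)} (m + 1) := by
  constructor
  · obtain ⟨k, hk⟩ := hm.1
    refine ⟨r k, sr 0, .inl rfl, ?_⟩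
    rw [inv_r_mul_sr_zero_mul_r, wordLength_sr, ← hk]
  · rintro _ ⟨g, s, hs, rfl⟩
    have hrot : ∀ ε : ZMod n, (ε = 1 ∨ ε = -1) → wordLength (stdGens n) (g⁻¹ * r ε * g) ≤ m + 1 :=
      fun ε hε => (wordLength_le_one_of_mem (inv_mul_r_mul_mem_stdGens g hε)).trans (by omega)
    rcases hs with rfl | rfl | rfl
    · obtain ⟨k, hk⟩ := inv_mul_sr_zero_mul g
      rw [hk, wordLength_sr]
      exact Nat.add_le_add_right (hm.2 ⟨k, rfl⟩) 1
    · exact hrot 1 (.inl rfl)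
    · rw [r_one_pow_pred]
      exact hrot (-1) (.inr rfl)

end DihedralGroup

theorem stmt15 (n : ℕ) (hn : 3 ≤ n) :
    letI S : Set (DihedralGroup n) := {sr 0, r 1, (r 1 : DihedralGroup n) ^ (n - 1)}
    letI Λ : Set ℕ := {k | ∃ g : DihedralGroup n, ∃ s ∈ S,
      k = wordLength S (g⁻¹ * s * g)}
    (4 ∣ n → IsGreatest Λ (n / 2 + 1)) ∧
      (2 ∣ n → ¬ 4 ∣ n → IsGreatest Λ (n / 2)) ∧
      (Odd n → IsGreatest Λ (n / 2 + 1)) := by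
  have : NeZero n := ⟨by omega⟩
  refine ⟨fun h4 => ?_, fun h2 h4 => ?_, fun hodd => ?_⟩
  · exact isGreatest_wordLength_conj_stdGens
      (ZMod.isGreatest_natAbs_valMinAbs_two_mul_of_four_dvd h4)
  · have := isGreatest_wordLength_conj_stdGens
      (ZMod.isGreatest_natAbs_valMinAbs_two_mul_of_two_dvd_of_not_four_dvd h2 h4)
    rwa [Nat.sub_add_cancel (by omega)] at this
  · exact isGreatest_wordLength_conj_stdGens
      (ZMod.isGreatest_natAbs_valMinAbs_two_mul_of_odd hodd)
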